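/- arXiv:1706.09264 — 2 statements merged into one kernel-verified Lean document; each statement's English description precedes it below -/
import Mathlib

section
/- If D and C are Cantor sets in S^3 with D ⊆ C, then for every point x ∈ D, the local genus of D at x is at most the local genus of C at x. -/
/-!
Given a defining sequence `(M i)` for `C`, keep in each `M i` only the components that meet `D`.
This is a defining sequence for `D`: a point lying in all of these sets lies in `D`, because the
components of the `M i` containing it shrink to a connected, hence degenerate, subset of the
totally disconnected `C` that still meets the compact set `D`. For `x ∈ D`, the component of `x`
in the restricted stage is its component in `M i`, so both sequences assign `x` the same genus.
-/

noncomputable section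

/-- The 3-sphere, realized as the unit sphere in ℝ⁴. -/
abbrev S3 : Type := Metric.sphere (0 : EuclideanSpace ℝ (Fin 4)) 1

/-- A Cantor set: nonempty, compact, perfect, totally disconnected. -/
def IsCantorSet {X : Type*} [TopologicalSpace X] (C : Set X) : Prop :=
  C.Nonempty ∧ IsCompact C ∧ Perfect C ∧ IsTotallyDisconnected C

/-- A defining sequence for a compactum `C ⊆ S³`: a nested sequence of compacta,
each a finite disjoint union of handlebodies, with `M (i+1) ⊆ Int (M i)` and `⋂ M i = C`. -/
structure DefiningSeq (Handlebody : Set S3 → Prop) (C : Set S3) where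
  M : ℕ → Set S3
  compact : ∀ i, IsCompact (M i)
  nested : ∀ i, M (i + 1) ⊆ interior (M i)
  handle : ∀ i, ∀ x ∈ M i, Handlebody (connectedComponentIn (M i) x)
  finiteComps : ∀ i, {S : Set S3 | ∃ x ∈ M i, S = connectedComponentIn (M i) x}.Finite
  iInter_eq : ⋂ i, M i = C

/-- `g_x(C; (M_i))`: supremum of genera of the components containing `x`. -/
def seqGenus (genus : Set S3 → ℕ) {Handlebody : Set S3 → Prop} {C : Set S3}
    (s : DefiningSeq Handlebody C) (x : S3) : ℕ∞ :=
  ⨆ i, (genus (connectedComponentIn (s.M i) x) : ℕ∞)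

/-- The local genus `g_x(C)`: infimum over all defining sequences. -/
def localGenus (Handlebody : Set S3 → Prop) (genus : Set S3 → ℕ)
    (x : S3) (C : Set S3) : ℕ∞ :=
  ⨅ s : DefiningSeq Handlebody C, seqGenus genus s x

open Set

section Topology

variable {X : Type*} [TopologicalSpace X]

theorem IsClosed.connectedComponentIn {F : Set X} (hF : IsClosed F) (x : X) :
    IsClosed (connectedComponentIn F x) := by
  by_cases hx : x ∈ F
  · rw [connectedComponentIn_eq_image hx]
    exact hF.isClosedEmbedding_subtypeVal.isClosedMap _ isClosed_connectedComponent
  · rw [connectedComponentIn_eq_empty hx]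
    exact isClosed_empty

theorem IsPreconnected.iInter_of_directed [T2Space X] {ι : Type*} [Nonempty ι]
    {K : ι → Set X} (hdir : Directed (· ⊇ ·) K) (hK : ∀ i, IsCompact (K i))
    (hKc : ∀ i, IsPreconnected (K i)) : IsPreconnected (⋂ i, K i) := by
  set T := ⋂ i, K i
  have hT : IsCompact T := (hK (Classical.arbitrary ι)).of_isClosed_subset
    (isClosed_iInter fun i => (hK i).isClosed) (iInter_subset _ _)
  rw [isPreconnected_closed_iff]
  rintro t t' ht ht' hTtt' ⟨a, haT, hat⟩ ⟨b, hbT, hbt'⟩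
  by_contra hdisj
  have hAB : Disjoint (T ∩ t) (T ∩ t') :=
    disjoint_left.mpr fun z ⟨hzT, hzt⟩ ⟨_, hzt'⟩ => hdisj ⟨z, hzT, hzt, hzt'⟩
  obtain ⟨U, V, hU, hV, htU, ht'V, hUV⟩ :=
    SeparatedNhds.of_isCompact_isCompact (hT.inter_right ht) (hT.inter_right ht') hAB
  obtain ⟨i, hi⟩ : ∃ i, K i ⊆ U ∪ V := exists_subset_nhds_of_isCompact hdir hK fun z hz =>
    (hU.union hV).mem_nhds <| (hTtt' hz).imp (fun h => htU ⟨hz, h⟩) fun h => ht'V ⟨hz, h⟩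
  obtain ⟨z, -, hzU, hzV⟩ := hKc i U V hU hV hi ⟨a, mem_iInter.mp haT i, htU ⟨haT, hat⟩⟩
    ⟨b, mem_iInter.mp hbT i, ht'V ⟨hbT, hbt'⟩⟩
  exact disjoint_left.mp hUV hzU hzV

end Topology

section ComponentsMeeting

variable {X : Type*} [TopologicalSpace X] {M M' D : Set X} {y : X}

def componentsMeeting (M D : Set X) : Set X :=
  ⋃ d ∈ D, connectedComponentIn M d

theorem componentsMeeting_subset : componentsMeeting M D ⊆ M :=
  iUnion₂_subset fun _ _ => connectedComponentIn_subset _ _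

theorem subset_componentsMeeting (hD : D ⊆ M) : D ⊆ componentsMeeting M D :=
  fun _ hd => mem_biUnion hd (mem_connectedComponentIn (hD hd))

theorem componentsMeeting_mono_left (h : M' ⊆ M) :
    componentsMeeting M' D ⊆ componentsMeeting M D :=
  biUnion_mono subset_rfl fun d _ => connectedComponentIn_mono d h

theorem connectedComponentIn_subset_componentsMeeting (hy : y ∈ componentsMeeting M D) :
    connectedComponentIn M y ⊆ componentsMeeting M D := by
  obtain ⟨d, hd, hyd⟩ := mem_iUnion₂.mp hy
  rw [← connectedComponentIn_eq hyd]
  exact subset_biUnion_of_mem hd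

theorem connectedComponentIn_componentsMeeting (hy : y ∈ componentsMeeting M D) :
    connectedComponentIn (componentsMeeting M D) y = connectedComponentIn M y :=
  (connectedComponentIn_mono y componentsMeeting_subset).antisymm <|
    isPreconnected_connectedComponentIn.subset_connectedComponentIn
      (mem_connectedComponentIn (componentsMeeting_subset hy))
      (connectedComponentIn_subset_componentsMeeting hy)

variable (hM : IsClosed M)
  (hfin : {S | ∃ x ∈ M, S = connectedComponentIn M x}.Finite)
include hM hfin

theorem isClosed_componentsMeeting : IsClosed (componentsMeeting M D) := by
  have hfin' : (connectedComponentIn M '' D).Finite := by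
    refine (hfin.insert ∅).subset ?_
    rintro _ ⟨d, -, rfl⟩
    by_cases hd : d ∈ M
    · exact Or.inr ⟨d, hd, rfl⟩
    · exact Or.inl (connectedComponentIn_eq_empty hd)
  rw [componentsMeeting, ← sUnion_image, sUnion_eq_biUnion]
  exact hfin'.isClosed_biUnion fun _ ⟨d, _, hS⟩ => hS ▸ hM.connectedComponentIn d

-- Relatively open in `M`: the complement is again a finite union of closed components.
theorem interior_inter_componentsMeeting_subset :
    interior M ∩ componentsMeeting M D ⊆ interior (componentsMeeting M D) := by
  set R := componentsMeeting M D
  set R' := componentsMeeting M (M \ R)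
  have hR'_closed : IsClosed R' := isClosed_componentsMeeting hM hfin
  have hR_R' : Disjoint R R' := disjoint_left.mpr fun w hwR hwR' => by
    obtain ⟨z, ⟨hzM, hzR⟩, hwz⟩ := mem_iUnion₂.mp hwR'
    have hz : z ∈ connectedComponentIn M w :=
      connectedComponentIn_eq hwz ▸ mem_connectedComponentIn hzM
    exact hzR (connectedComponentIn_subset_componentsMeeting hwR hz)
  have hM_R' : M ⊆ R ∪ R' := fun w hwM =>
    or_iff_not_imp_left.mpr fun hwR => subset_componentsMeeting sdiff_subset ⟨hwM, hwR⟩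
  refine fun w ⟨hwM, hwR⟩ => interior_maximal ?_ (isOpen_interior.sdiff hR'_closed)
    ⟨hwM, disjoint_left.mp hR_R' hwR⟩
  exact fun v ⟨hvM, hvR'⟩ => (hM_R' (interior_subset hvM)).resolve_right hvR'

omit hM hfin

theorem iInter_componentsMeeting [T2Space X] {M : ℕ → Set X} (hanti : Antitone M)
    (hM : ∀ i, IsCompact (M i)) (htd : IsTotallyDisconnected (⋂ i, M i)) (hD : IsCompact D)
    (hDM : D ⊆ ⋂ i, M i) : ⋂ i, componentsMeeting (M i) D = D := by
  refine Subset.antisymm (fun z hz => ?_) <|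
    subset_iInter fun i => subset_componentsMeeting (hDM.trans (iInter_subset M i))
  have hzR : ∀ i, z ∈ componentsMeeting (M i) D := mem_iInter.mp hz
  set K := fun i => connectedComponentIn (M i) z
  have hK_anti : Antitone K := fun i j h => connectedComponentIn_mono z (hanti h)
  have hK_compact : ∀ i, IsCompact (K i) := fun i => (hM i).of_isClosed_subset
    ((hM i).isClosed.connectedComponentIn z) (connectedComponentIn_subset _ _)
  have hKD : ∀ i, (K i ∩ D).Nonempty := fun i => by
    obtain ⟨d, hd, hzd⟩ := mem_iUnion₂.mp (hzR i)
    refine ⟨d, show d ∈ connectedComponentIn (M i) z from ?_, hd⟩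
    rw [← connectedComponentIn_eq hzd]
    exact mem_connectedComponentIn (hDM.trans (iInter_subset M i) hd)
  have hKD_compact : ∀ i, IsCompact (K i ∩ D) := fun i => (hK_compact i).inter_right hD.isClosed
  obtain ⟨d, hd⟩ := IsCompact.nonempty_iInter_of_directed_nonempty_isCompact_isClosed _
    (Antitone.directed_ge fun i j h => inter_subset_inter_left D (hK_anti h)) hKD hKD_compact
    fun i => (hKD_compact i).isClosed
  have hT : (⋂ i, K i).Subsingleton :=
    htd _ (iInter_mono fun i => connectedComponentIn_subset _ _) <|
      .iInter_of_directed hK_anti.directed_ge hK_compact fun _ =>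
        isPreconnected_connectedComponentIn
  have hzd : z = d :=
    hT (mem_iInter.mpr fun i => mem_connectedComponentIn (componentsMeeting_subset (hzR i)))
      (mem_iInter.mpr fun i => (mem_iInter.mp hd i).1)
  exact hzd ▸ (mem_iInter.mp hd 0).2

end ComponentsMeeting

namespace DefiningSeq

variable {Handlebody : Set S3 → Prop} {C D : Set S3} (s : DefiningSeq Handlebody C)

theorem antitone_M : Antitone s.M :=
  antitone_nat_of_succ_le fun i => (s.nested i).trans interior_subset

theorem subset_M (i : ℕ) : C ⊆ s.M i :=
  s.iInter_eq.symm.subset.trans (iInter_subset s.M i)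

def restrict (hDC : D ⊆ C) (hD : IsCompact D) (hC : IsTotallyDisconnected C) :
    DefiningSeq Handlebody D where
  M i := componentsMeeting (s.M i) D
  compact i := (s.compact i).of_isClosed_subset
    (isClosed_componentsMeeting (s.compact i).isClosed (s.finiteComps i)) componentsMeeting_subset
  nested i _ hy :=
    interior_inter_componentsMeeting_subset (s.compact i).isClosed (s.finiteComps i)
      ⟨s.nested i (componentsMeeting_subset hy),
        componentsMeeting_mono_left (s.antitone_M i.le_succ) hy⟩
  handle i y hy := by
    rw [connectedComponentIn_componentsMeeting hy]
    exact s.handle i y (componentsMeeting_subset hy)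
  finiteComps i := (s.finiteComps i).subset <| by
    rintro _ ⟨y, hy, rfl⟩
    exact ⟨y, componentsMeeting_subset hy, connectedComponentIn_componentsMeeting hy⟩
  iInter_eq := by
    refine iInter_componentsMeeting s.antitone_M s.compact ?_ hD ?_ <;> rwa [s.iInter_eq]

theorem seqGenus_restrict (genus : Set S3 → ℕ) (hDC : D ⊆ C) (hD : IsCompact D)
    (hC : IsTotallyDisconnected C) {x : S3} (hx : x ∈ D) :
    seqGenus genus (s.restrict hDC hD hC) x = seqGenus genus s x :=
  iSup_congr fun i => congrArg (fun S => (genus S : ℕ∞)) <|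
    connectedComponentIn_componentsMeeting <|
      subset_componentsMeeting (hDC.trans (s.subset_M i)) hx

end DefiningSeq

/-- If `D ⊆ C` are Cantor sets in `S³`, then `g_x(D) ≤ g_x(C)` for every `x ∈ D`. -/
theorem localGenus_mono_of_subset (Handlebody : Set S3 → Prop) (genus : Set S3 → ℕ)
    (C D : Set S3) (hC : IsCantorSet C) (hD : IsCantorSet D) (hsub : D ⊆ C)
    (x : S3) (hx : x ∈ D) :
    localGenus Handlebody genus x D ≤ localGenus Handlebody genus x C :=
  le_iInf fun s => iInf_le_of_le (s.restrict hsub hD.2.1 hC.2.2.2)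
    (s.seqGenus_restrict genus hsub hD.2.1 hC.2.2.2 hx).le
end
end

section
/- Let (M_i) be a nested sequence of nonempty compact subsets of a metric space such that each component of M_i contains at least two components of M_{i+2}, and the supremum of diameters of components of M_i tends to 0 as i → ∞. Then C = ⋂_i M_i is homeomorphic to the Cantor set, provided each M_i has finitely many components, each of which is closed, and C is nonempty. -/
/-!
Tracing the components of `M (2 * k)` on `C` gives finite partitions of `C` into closed pieces,
each refining the previous one, each piece splitting into at least two, with mesh tending to `0`.
The splitting survives the trace because, by Cantor's intersection theorem, every component of
every `M j` meets `C`. Splitting off one piece at a time turns these partitions into a binary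
Cantor scheme on `C`; the map it induces from `ℕ → Bool` is a continuous bijection onto the
compact set `C`, hence a homeomorphism.
-/

open Set Filter Topology PiNat

theorem PiNat.isClosed_setOf_res_mem {α : Type*} [TopologicalSpace α] [DiscreteTopology α]
    (s : Set (List α)) (n : ℕ) : IsClosed {a : ℕ → α | res a n ∈ s} := by
  rw [← isOpen_compl_iff, isOpen_iff_forall_mem_open]
  intro a ha
  refine ⟨cylinder a n, fun b hb => ?_, isOpen_cylinder _ a n, self_mem_cylinder a n⟩
  have hres : res b n = res a n := by rwa [cylinder_eq_res] at hb
  rwa [mem_compl_iff, mem_ofPred_eq, hres]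

namespace CantorScheme

variable {X : Type*} {A : List Bool → Set X}

theorem antitone_of_union_eq (hunion : ∀ l, A (true :: l) ∪ A (false :: l) = A l) :
    CantorScheme.Antitone A := fun l b => by
  rw [← hunion l]
  cases b
  exacts [subset_union_right, subset_union_left]

theorem exists_forall_mem_res (hunion : ∀ l, A (true :: l) ∪ A (false :: l) = A l)
    {x : X} (hx : x ∈ A []) : ∃ a : ℕ → Bool, ∀ n, x ∈ A (res a n) := by
  have hne : ∀ n, ∃ a : ℕ → Bool, x ∈ A (res a n) := by
    intro n
    induction n with
    | zero => exact ⟨fun _ => true, hx⟩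
    | succ n ih =>
      obtain ⟨a, ha⟩ := ih
      obtain ⟨b, hb⟩ : ∃ b, x ∈ A (b :: res a n) := by
        rw [← hunion] at ha
        exact ha.elim (⟨true, ·⟩) (⟨false, ·⟩)
      have hres : res (Function.update a n b) n = res a n :=
        res_eq_res.2 fun m hm => Function.update_of_ne hm.ne _ _
      exact ⟨Function.update a n b, by rwa [res_succ, Function.update_self, hres]⟩
  have hanti : ∀ n, {a : ℕ → Bool | x ∈ A (res a (n + 1))} ⊆ {a | x ∈ A (res a n)} :=
    fun n _ ha => antitone_of_union_eq hunion _ _ ha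
  obtain ⟨a, ha⟩ :=
    IsCompact.nonempty_iInter_of_sequence_nonempty_isCompact_isClosed _ hanti hne
    (isClosed_setOf_res_mem {l | x ∈ A l} 0).isCompact
    (fun n => isClosed_setOf_res_mem {l | x ∈ A l} n)
  exact ⟨a, fun n => mem_iInter.1 ha n⟩

variable [MetricSpace X]

theorem nonempty_homeomorph_of_union_eq (hcpt : IsCompact (A []))
    (hclosed : ∀ l, IsClosed (A l)) (hne : ∀ l, (A l).Nonempty)
    (hunion : ∀ l, A (true :: l) ∪ A (false :: l) = A l) (hdisj : CantorScheme.Disjoint A)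
    (hdiam : VanishingDiam A) : Nonempty (A [] ≃ₜ (ℕ → Bool)) := by
  have hanti := antitone_of_union_eq hunion
  have hdom : ∀ a, a ∈ (inducedMap A).1 := fun a =>
    hcpt.nonempty_iInter_of_sequence_nonempty_isCompact_isClosed _ (fun _ => hanti _ _)
      (fun _ => hne _) (fun _ => hclosed _)
  let f : (ℕ → Bool) → A [] := fun a =>
    ⟨(inducedMap A).2 ⟨a, hdom a⟩, map_mem ⟨a, hdom a⟩ 0⟩
  have hcont : Continuous f :=
    (hdiam.map_continuous.comp (continuous_id.subtype_mk hdom)).subtype_mk _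
  have hinj : Function.Injective f := fun a b h =>
    congrArg Subtype.val (hdisj.map_injective (a₁ := ⟨a, hdom a⟩) (a₂ := ⟨b, hdom b⟩)
      (congrArg Subtype.val h))
  have hsurj : Function.Surjective f := by
    rintro ⟨x, hx⟩
    obtain ⟨a, ha⟩ := exists_forall_mem_res hunion hx
    refine ⟨a, Subtype.ext (eq_of_forall_dist_le fun ε hε => ?_)⟩
    obtain ⟨n, hn⟩ := hdiam.dist_lt ε hε a
    exact (hn _ (map_mem ⟨a, hdom a⟩ n) x (ha n)).le
  exact ⟨(hcont.homeoOfEquivCompactToT2 (f := Equiv.ofBijective f ⟨hinj, hsurj⟩)).symm⟩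

end CantorScheme

namespace Finset

variable {α : Type*} [Nonempty α] {T : Finset α}

theorem epsilon_mem (hT : T.Nonempty) : Classical.epsilon (· ∈ T) ∈ T :=
  Classical.epsilon_spec hT

theorem eq_singleton_epsilon (hT : T.Nonempty) (h : T.card ≤ 1) :
    T = {Classical.epsilon (· ∈ T)} :=
  eq_singleton_iff_unique_mem.2 ⟨epsilon_mem hT,
    fun _ ht => card_le_one.1 h _ ht _ (epsilon_mem hT)⟩

variable [DecidableEq α]

noncomputable def splitOff (b : Bool) (T : Finset α) : Finset α :=
  if b then {Classical.epsilon (· ∈ T)} else T.erase (Classical.epsilon (· ∈ T))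

theorem splitOff_subset (hT : T.Nonempty) (b : Bool) : T.splitOff b ⊆ T := by
  cases b
  · exact erase_subset _ _
  · exact singleton_subset_iff.2 (epsilon_mem hT)

theorem splitOff_true_union_splitOff_false (hT : T.Nonempty) :
    T.splitOff true ∪ T.splitOff false = T := by
  simp only [splitOff, if_true, Bool.false_eq_true, if_false, ← insert_eq,
    insert_erase (epsilon_mem hT)]

theorem disjoint_splitOff : Disjoint (T.splitOff true) (T.splitOff false) := by
  simp [splitOff]

theorem splitOff_nonempty (hT : 1 < T.card) (b : Bool) : (T.splitOff b).Nonempty := by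
  cases b
  · rw [← card_pos, splitOff, if_neg Bool.false_ne_true,
      card_erase_of_mem (epsilon_mem (card_pos.1 (zero_lt_one.trans hT)))]
    omega
  · exact singleton_nonempty _

theorem card_splitOff_lt (hT : 1 < T.card) (b : Bool) : (T.splitOff b).card < T.card := by
  cases b
  · exact card_erase_lt_of_mem (epsilon_mem (card_pos.1 (zero_lt_one.trans hT)))
  · simpa [splitOff] using hT

end Finset

structure IsSplittingPartitionSeq {X : Type*} [TopologicalSpace X] (C : Set X)
    (Q : ℕ → Finset (Set X)) : Prop where
  sUnion_eq : ∀ k, ⋃₀ (Q k : Set (Set X)) = C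
  nonempty : ∀ k, ∀ q ∈ Q k, q.Nonempty
  isClosed : ∀ k, ∀ q ∈ Q k, IsClosed q
  pairwiseDisjoint : ∀ k, (Q k : Set (Set X)).PairwiseDisjoint id
  refines : ∀ k, ∀ u ∈ Q (k + 1), ∃ t ∈ Q k, u ⊆ t
  splits : ∀ k, ∀ t ∈ Q k,
    ∃ u ∈ Q (k + 1), ∃ v ∈ Q (k + 1), u ⊆ t ∧ v ⊆ t ∧ u ≠ v

namespace IsSplittingPartitionSeq

open scoped Classical

variable {X : Type*} [TopologicalSpace X] {C : Set X} {Q : ℕ → Finset (Set X)}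

theorem sUnion_children (hQ : IsSplittingPartitionSeq C Q) {k : ℕ} {t : Set X} (ht : t ∈ Q k) :
    ⋃₀ ↑((Q (k + 1)).filter (· ⊆ t)) = t := by
  refine subset_antisymm (sUnion_subset fun u hu => (Finset.mem_filter.1 hu).2) fun w hw => ?_
  have hwC : w ∈ C := hQ.sUnion_eq k ▸ mem_sUnion_of_mem hw ht
  obtain ⟨u, hu, hwu⟩ := mem_sUnion.1 (hQ.sUnion_eq (k + 1) ▸ hwC)
  obtain ⟨t', ht', hut'⟩ := hQ.refines k u hu
  have htt' : t' = t :=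
    (hQ.pairwiseDisjoint k).elim ht' ht (not_disjoint_iff.2 ⟨w, hut' hwu, hw⟩)
  exact ⟨u, Finset.mem_filter.2 ⟨hu, htt' ▸ hut'⟩, hwu⟩

theorem one_lt_card_children (hQ : IsSplittingPartitionSeq C Q) {k : ℕ} {t : Set X}
    (ht : t ∈ Q k) : 1 < ((Q (k + 1)).filter (· ⊆ t)).card := by
  obtain ⟨u, hu, v, hv, hut, hvt, huv⟩ := hQ.splits k t ht
  exact Finset.one_lt_card.2
    ⟨u, Finset.mem_filter.2 ⟨hu, hut⟩, v, Finset.mem_filter.2 ⟨hv, hvt⟩, huv⟩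

theorem disjoint_sUnion (hQ : IsSplittingPartitionSeq C Q) {k : ℕ} {T U : Finset (Set X)}
    (hT : T ⊆ Q k) (hU : U ⊆ Q k) (hTU : Disjoint T U) :
    Disjoint (⋃₀ (T : Set (Set X))) (⋃₀ (U : Set (Set X))) :=
  disjoint_sUnion_left.2 fun _ ht => disjoint_sUnion_right.2 fun _ hu =>
    hQ.pairwiseDisjoint k (hT ht) (hU hu) fun h => Finset.disjoint_left.1 hTU ht (h ▸ hu)

end IsSplittingPartitionSeq

namespace PartitionScheme

open scoped Classical

variable {X : Type*} (Q : ℕ → Finset (Set X))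

/- A node is a level `k` together with a nonempty set of pieces of `Q k`. Its two children split
off one piece from the rest, after a lone piece has first been replaced by its children at level
`k + 1`. Along every branch the level therefore tends to infinity, and `piece l` lies inside a
single piece of every level below `level Q l`. -/
noncomputable def expand (p : ℕ × Finset (Set X)) : ℕ × Finset (Set X) :=
  if 1 < p.2.card then p
  else (p.1 + 1, (Q (p.1 + 1)).filter (· ⊆ Classical.epsilon (· ∈ p.2)))

noncomputable def node : List Bool → ℕ × Finset (Set X)
  | [] => (0, Q 0)
  | b :: l => ((expand Q (node l)).1, (expand Q (node l)).2.splitOff b)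

noncomputable def level (l : List Bool) : ℕ := (node Q l).1

noncomputable def piece (l : List Bool) : Set X := ⋃₀ ↑(node Q l).2

theorem expand_subset {p : ℕ × Finset (Set X)} (hp : p.2 ⊆ Q p.1) :
    (expand Q p).2 ⊆ Q (expand Q p).1 := by
  unfold expand
  split_ifs
  · exact hp
  · exact Finset.filter_subset _ _

end PartitionScheme

namespace IsSplittingPartitionSeq

open scoped Classical
open PartitionScheme

variable {X : Type*} [TopologicalSpace X] {C : Set X} {Q : ℕ → Finset (Set X)}
  (hQ : IsSplittingPartitionSeq C Q)

section Expand

variable {p : ℕ × Finset (Set X)} (hp : p.2 ⊆ Q p.1) (hpne : p.2.Nonempty)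
include hQ hp hpne

theorem one_lt_card_expand : 1 < (expand Q p).2.card := by
  unfold expand
  split_ifs with h
  · exact h
  · exact hQ.one_lt_card_children (hp (Finset.epsilon_mem hpne))

theorem sUnion_expand : ⋃₀ ↑(expand Q p).2 = ⋃₀ (p.2 : Set (Set X)) := by
  unfold expand
  split_ifs with h
  · rfl
  · rw [hQ.sUnion_children (hp (Finset.epsilon_mem hpne))]
    conv_rhs => rw [Finset.eq_singleton_epsilon hpne (not_lt.1 h)]
    simp

theorem expand_eq_or : expand Q p = p ∨
    (expand Q p).1 = p.1 + 1 ∧ ∃ t ∈ Q p.1, ⋃₀ ↑(expand Q p).2 ⊆ t := by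
  unfold expand
  split_ifs with h
  · exact Or.inl rfl
  · refine Or.inr ⟨rfl, _, hp (Finset.epsilon_mem hpne), ?_⟩
    rw [hQ.sUnion_children (hp (Finset.epsilon_mem hpne))]

end Expand

include hQ in
theorem piece_nil : piece Q [] = C := hQ.sUnion_eq 0

variable (hC : C.Nonempty)
include hQ hC

theorem node_subset_and_nonempty :
    ∀ l, (node Q l).2 ⊆ Q (level Q l) ∧ (node Q l).2.Nonempty
  | [] => by
    obtain ⟨x, hx⟩ := hC
    rw [← hQ.sUnion_eq 0] at hx
    obtain ⟨q, hq, -⟩ := hx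
    exact ⟨subset_rfl, q, hq⟩
  | b :: l => by
    obtain ⟨hp, hpne⟩ := node_subset_and_nonempty l
    have hE := hQ.one_lt_card_expand hp hpne
    exact ⟨(Finset.splitOff_subset (Finset.card_pos.1 (zero_lt_one.trans hE)) b).trans
      (expand_subset Q hp), Finset.splitOff_nonempty hE b⟩

theorem isClosed_piece (l : List Bool) : IsClosed (piece Q l) := by
  rw [piece, sUnion_eq_biUnion]
  exact isClosed_biUnion_finset fun q hq =>
    hQ.isClosed _ q ((hQ.node_subset_and_nonempty hC l).1 hq)

theorem piece_nonempty (l : List Bool) : (piece Q l).Nonempty := by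
  obtain ⟨hp, q, hq⟩ := hQ.node_subset_and_nonempty hC l
  obtain ⟨x, hx⟩ := hQ.nonempty _ q (hp hq)
  exact ⟨x, q, hq, hx⟩

theorem piece_true_union_piece_false (l : List Bool) :
    piece Q (true :: l) ∪ piece Q (false :: l) = piece Q l := by
  obtain ⟨hp, hpne⟩ := hQ.node_subset_and_nonempty hC l
  have hE := hQ.one_lt_card_expand hp hpne
  simp only [piece, node]
  rw [← sUnion_union, ← Finset.coe_union,
    Finset.splitOff_true_union_splitOff_false (Finset.card_pos.1 (zero_lt_one.trans hE)),
    hQ.sUnion_expand hp hpne]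

theorem cantorScheme_disjoint : CantorScheme.Disjoint (piece Q) := by
  intro l
  obtain ⟨hp, hpne⟩ := hQ.node_subset_and_nonempty hC l
  have hE := Finset.card_pos.1 (zero_lt_one.trans (hQ.one_lt_card_expand hp hpne))
  have hdisj : Disjoint (piece Q (true :: l)) (piece Q (false :: l)) :=
    hQ.disjoint_sUnion ((Finset.splitOff_subset hE _).trans (expand_subset Q hp))
      ((Finset.splitOff_subset hE _).trans (expand_subset Q hp)) Finset.disjoint_splitOff
  rintro (_ | _) (_ | _) hne
  exacts [absurd rfl hne, hdisj.symm, hdisj, absurd rfl hne]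

theorem level_cons (b : Bool) (l : List Bool) :
    (level Q (b :: l) = level Q l ∧ (node Q (b :: l)).2.card < (node Q l).2.card) ∨
      (level Q (b :: l) = level Q l + 1 ∧ ∃ t ∈ Q (level Q l), piece Q (b :: l) ⊆ t) := by
  obtain ⟨hp, hpne⟩ := hQ.node_subset_and_nonempty hC l
  have hE := hQ.one_lt_card_expand hp hpne
  have hsub : piece Q (b :: l) ⊆ ⋃₀ ↑(expand Q (node Q l)).2 :=
    sUnion_subset_sUnion (Finset.splitOff_subset (Finset.card_pos.1 (zero_lt_one.trans hE)) b)
  rcases hQ.expand_eq_or hp hpne with h | ⟨h, t, ht, ht'⟩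
  · refine Or.inl ⟨(congrArg Prod.fst h :), ?_⟩
    calc (node Q (b :: l)).2.card < (expand Q (node Q l)).2.card := Finset.card_splitOff_lt hE b
      _ = (node Q l).2.card := by rw [h]
  · exact Or.inr ⟨h, t, ht, hsub.trans ht'⟩

theorem piece_subset_of_lt_level :
    ∀ l, ∀ k < level Q l, ∃ q ∈ Q k, piece Q l ⊆ q
  | [], k, hk => absurd hk (Nat.not_lt_zero k)
  | b :: l, k, hk => by
    have hsub : piece Q (b :: l) ⊆ piece Q l :=
      CantorScheme.antitone_of_union_eq (hQ.piece_true_union_piece_false hC) l b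
    have ih := piece_subset_of_lt_level l k
    rcases hQ.level_cons hC b l with ⟨h, -⟩ | ⟨h, t, ht, hbt⟩
    · obtain ⟨q, hq, hlq⟩ := ih (h ▸ hk)
      exact ⟨q, hq, hsub.trans hlq⟩
    · rcases (Nat.lt_succ_iff.1 (h ▸ hk)).lt_or_eq with hk' | rfl
      · obtain ⟨q, hq, hlq⟩ := ih hk'
        exact ⟨q, hq, hsub.trans hlq⟩
      · exact ⟨t, ht, hbt⟩

theorem monotone_level_res (a : ℕ → Bool) : Monotone fun n => level Q (res a n) :=
  monotone_nat_of_le_succ fun n => by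
    rcases hQ.level_cons hC (a n) (res a n) with ⟨h, -⟩ | ⟨h, -⟩ <;>
      simp only [res_succ, h, le_refl, Nat.le_succ]

theorem level_res_lt_level_res_add (a : ℕ → Bool) :
    ∀ c n, (node Q (res a n)).2.card ≤ c → level Q (res a n) < level Q (res a (n + c))
  | 0, n, hc => absurd hc (Finset.card_pos.2 (hQ.node_subset_and_nonempty hC _).2).not_ge
  | c + 1, n, hc => by
    rcases hQ.level_cons hC (a n) (res a n) with ⟨h, hcard⟩ | ⟨h, -⟩
    · have := level_res_lt_level_res_add a c (n + 1) (by rw [res_succ]; omega)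
      rw [res_succ, h] at this
      rwa [Nat.add_right_comm, Nat.add_assoc] at this
    · calc level Q (res a n) < level Q (res a (n + 1)) := by rw [res_succ, h]; omega
        _ ≤ level Q (res a (n + (c + 1))) := hQ.monotone_level_res hC a (by omega)

theorem tendsto_level_res (a : ℕ → Bool) :
    Tendsto (fun n => level Q (res a n)) atTop atTop := by
  refine tendsto_atTop_atTop_of_monotone (hQ.monotone_level_res hC a) fun k => ?_
  induction k with
  | zero => exact ⟨0, Nat.zero_le _⟩
  | succ k ih =>
    obtain ⟨n, hn⟩ := ih
    exact ⟨_, hn.trans_lt (hQ.level_res_lt_level_res_add hC a _ n le_rfl)⟩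

end IsSplittingPartitionSeq

section Components

variable {X : Type*} [TopologicalSpace X] {S T C : Set X} {x y : X}

theorem connectedComponentIn_subset_of_mem (hST : S ⊆ T) (hy : y ∈ connectedComponentIn T x) :
    connectedComponentIn S y ⊆ connectedComponentIn T x :=
  (connectedComponentIn_mono y hST).trans (connectedComponentIn_eq hy).symm.subset

theorem connectedComponentIn_eq_of_inter_eq (hx : x ∈ S) (hxC : x ∈ C)
    (h : connectedComponentIn S x ∩ C = connectedComponentIn S y ∩ C) :
    connectedComponentIn S x = connectedComponentIn S y :=
  (connectedComponentIn_eq (h ▸ ⟨mem_connectedComponentIn hx, hxC⟩ :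
    x ∈ connectedComponentIn S y ∩ C).1).symm

theorem sUnion_image_connectedComponentIn_inter (h : C ⊆ S) :
    ⋃₀ ((fun x => connectedComponentIn S x ∩ C) '' C) = C :=
  subset_antisymm (sUnion_subset <| forall_mem_image.2 fun _ _ => inter_subset_right)
    fun _ hx => ⟨_, mem_image_of_mem _ hx, mem_connectedComponentIn (h hx), hx⟩

theorem pairwiseDisjoint_image_connectedComponentIn_inter :
    ((fun x => connectedComponentIn S x ∩ C) '' C).PairwiseDisjoint id := by
  rintro _ ⟨x, -, rfl⟩ _ ⟨y, -, rfl⟩ hne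
  refine disjoint_left.2 fun w hwx hwy => hne ?_
  show connectedComponentIn S x ∩ C = connectedComponentIn S y ∩ C
  rw [connectedComponentIn_eq hwx.1, connectedComponentIn_eq hwy.1]

theorem finite_image_connectedComponentIn_inter
    (hfin : {T | ∃ x ∈ S, T = connectedComponentIn S x}.Finite) (h : C ⊆ S) :
    ((fun x => connectedComponentIn S x ∩ C) '' C).Finite :=
  (hfin.image (· ∩ C)).subset <| forall_mem_image.2 fun x hx => ⟨_, ⟨x, h hx, rfl⟩, rfl⟩

variable [T2Space X] {N : ℕ → Set X}

theorem connectedComponentIn_inter_iInter_nonempty (hcpt : ∀ k, IsCompact (N k))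
    (hnested : ∀ k, N (k + 1) ⊆ N k)
    (hclosed : ∀ k, ∀ x ∈ N k, IsClosed (connectedComponentIn (N k) x))
    (hnext : ∀ k, ∀ x ∈ N k, (N (k + 1) ∩ connectedComponentIn (N k) x).Nonempty)
    {j : ℕ} (hx : x ∈ N j) : (connectedComponentIn (N j) x ∩ ⋂ k, N k).Nonempty := by
  have hanti : Antitone N := antitone_nat_of_succ_le hnested
  set K := connectedComponentIn (N j) x
  have hne : ∀ k, (K ∩ N (j + k)).Nonempty := by
    intro k
    induction k with
    | zero => exact ⟨x, mem_connectedComponentIn hx, hx⟩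
    | succ k ih =>
      obtain ⟨y, hyK, hy⟩ := ih
      obtain ⟨z, hz, hzy⟩ := hnext _ y hy
      exact ⟨z, connectedComponentIn_subset_of_mem (hanti (Nat.le_add_right j k)) hyK hzy, hz⟩
  obtain ⟨p, hp⟩ := IsCompact.nonempty_iInter_of_sequence_nonempty_isCompact_isClosed
    (fun k => K ∩ N (j + k)) (fun k => inter_subset_inter_right _ (hnested _)) hne
    ((hcpt j).inter_left (hclosed j x hx))
    (fun k => (hclosed j x hx).inter (hcpt _).isClosed)
  rw [mem_iInter] at hp
  exact ⟨p, (hp 0).1, mem_iInter.2 fun i => hanti (Nat.le_add_left i j) (hp i).2⟩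

theorem isSplittingPartitionSeq_of_coe_eq {Q : ℕ → Finset (Set X)}
    (hQ : ∀ k, (Q k : Set (Set X)) =
      (fun x => connectedComponentIn (N k) x ∩ ⋂ i, N i) '' ⋂ i, N i)
    (hcpt : ∀ k, IsCompact (N k)) (hnested : ∀ k, N (k + 1) ⊆ N k)
    (hclosed : ∀ k, ∀ x ∈ N k, IsClosed (connectedComponentIn (N k) x))
    (hsplit : ∀ k, ∀ x ∈ N k, ∃ y ∈ N (k + 1) ∩ connectedComponentIn (N k) x,
      ∃ z ∈ N (k + 1) ∩ connectedComponentIn (N k) x,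
        connectedComponentIn (N (k + 1)) y ≠ connectedComponentIn (N (k + 1)) z) :
    IsSplittingPartitionSeq (⋂ i, N i) Q := by
  have hCN : ∀ k, ⋂ i, N i ⊆ N k := iInter_subset N
  have hmeets : ∀ k, ∀ y ∈ N k, (connectedComponentIn (N k) y ∩ ⋂ i, N i).Nonempty :=
    fun k y hy => connectedComponentIn_inter_iInter_nonempty hcpt hnested hclosed
      (fun k x hx => (hsplit k x hx).elim fun y hy => ⟨y, hy.1⟩) hy
  refine ⟨fun k => ?_, fun k => ?_, fun k => ?_, fun k => ?_, fun k => ?_, fun k => ?_⟩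
  · rw [hQ]
    exact sUnion_image_connectedComponentIn_inter (hCN k)
  · simp only [Finset.mem_coe.symm, hQ, forall_mem_image]
    exact fun x hx => ⟨x, mem_connectedComponentIn (hCN k hx), hx⟩
  · simp only [Finset.mem_coe.symm, hQ, forall_mem_image]
    exact fun x hx =>
      (hclosed k x (hCN k hx)).inter (isClosed_iInter fun i => (hcpt i).isClosed)
  · rw [hQ]
    exact pairwiseDisjoint_image_connectedComponentIn_inter
  · simp only [Finset.mem_coe.symm, hQ, forall_mem_image, exists_mem_image]
    exact fun x hx =>
      ⟨x, hx, inter_subset_inter_left _ (connectedComponentIn_mono x (hnested k))⟩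
  · simp only [Finset.mem_coe.symm, hQ, forall_mem_image, exists_mem_image]
    intro x hx
    obtain ⟨y, hy, z, hz, hyz⟩ := hsplit k x (hCN k hx)
    obtain ⟨cy, hcy, hcyC⟩ := hmeets _ y hy.1
    obtain ⟨cz, hcz, hczC⟩ := hmeets _ z hz.1
    refine ⟨cy, hcyC, cz, hczC, ?_, ?_, fun h => hyz ?_⟩
    · rw [← connectedComponentIn_eq hcy]
      exact inter_subset_inter_left _ (connectedComponentIn_subset_of_mem (hnested k) hy.2)
    · rw [← connectedComponentIn_eq hcz]
      exact inter_subset_inter_left _ (connectedComponentIn_subset_of_mem (hnested k) hz.2)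
    · rw [connectedComponentIn_eq hcy, connectedComponentIn_eq hcz]
      exact connectedComponentIn_eq_of_inter_eq (hCN _ hcyC) hcyC h

end Components

namespace IsSplittingPartitionSeq

open PartitionScheme

variable {X : Type*} [MetricSpace X] {C : Set X} {Q : ℕ → Finset (Set X)}

theorem vanishingDiam (hQ : IsSplittingPartitionSeq C Q) (hC : C.Nonempty)
    (hmesh : Tendsto (fun k => ⨆ q ∈ Q k, Metric.ediam q) atTop (𝓝 0)) :
    CantorScheme.VanishingDiam (piece Q) := by
  intro a
  rw [ENNReal.tendsto_atTop_zero] at hmesh ⊢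
  intro ε hε
  obtain ⟨k, hk⟩ := hmesh ε hε
  obtain ⟨N, hN⟩ := eventually_atTop.1 ((hQ.tendsto_level_res hC a).eventually_gt_atTop k)
  refine ⟨N, fun n hn => ?_⟩
  obtain ⟨q, hq, hsub⟩ := hQ.piece_subset_of_lt_level hC _ k (hN n hn)
  calc Metric.ediam (piece Q (res a n)) ≤ Metric.ediam q := Metric.ediam_mono hsub
    _ ≤ ⨆ q ∈ Q k, Metric.ediam q := le_iSup₂ (f := fun q _ => Metric.ediam q) q hq
    _ ≤ ε := hk k le_rfl

theorem nonempty_homeomorph_cantor (hQ : IsSplittingPartitionSeq C Q) (hcpt : IsCompact C)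
    (hC : C.Nonempty) (hmesh : Tendsto (fun k => ⨆ q ∈ Q k, Metric.ediam q) atTop (𝓝 0)) :
    Nonempty (C ≃ₜ (ℕ → Bool)) := by
  have h := CantorScheme.nonempty_homeomorph_of_union_eq (hQ.piece_nil ▸ hcpt)
    (hQ.isClosed_piece hC) (hQ.piece_nonempty hC) (hQ.piece_true_union_piece_false hC)
    (hQ.cantorScheme_disjoint hC) (hQ.vanishingDiam hC hmesh)
  rwa [hQ.piece_nil] at h

end IsSplittingPartitionSeq

theorem nonempty_homeomorph_cantor_iInter {X : Type*} [MetricSpace X] {N : ℕ → Set X}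
    (hcpt : ∀ k, IsCompact (N k)) (hnested : ∀ k, N (k + 1) ⊆ N k)
    (hfin : ∀ k, {S | ∃ x ∈ N k, S = connectedComponentIn (N k) x}.Finite)
    (hclosed : ∀ k, ∀ x ∈ N k, IsClosed (connectedComponentIn (N k) x))
    (hsplit : ∀ k, ∀ x ∈ N k, ∃ y ∈ N (k + 1) ∩ connectedComponentIn (N k) x,
      ∃ z ∈ N (k + 1) ∩ connectedComponentIn (N k) x,
        connectedComponentIn (N (k + 1)) y ≠ connectedComponentIn (N (k + 1)) z)
    (hdiam : Tendsto (fun k => ⨆ x ∈ N k, Metric.ediam (connectedComponentIn (N k) x))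
      atTop (𝓝 0))
    (hne : (⋂ k, N k).Nonempty) : Nonempty ((⋂ k, N k) ≃ₜ (ℕ → Bool)) := by
  obtain ⟨Q, hQ⟩ : ∃ Q : ℕ → Finset (Set X), ∀ k, (Q k : Set (Set X)) =
      (fun x => connectedComponentIn (N k) x ∩ ⋂ i, N i) '' ⋂ i, N i :=
    ⟨fun k => (finite_image_connectedComponentIn_inter (hfin k) (iInter_subset N k)).toFinset,
      fun k => Set.Finite.coe_toFinset _⟩
  have hmesh : ∀ k, ⨆ q ∈ Q k, Metric.ediam q ≤
      ⨆ x ∈ N k, Metric.ediam (connectedComponentIn (N k) x) := fun k => by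
    refine iSup₂_le fun q hq => ?_
    rw [← Finset.mem_coe, hQ] at hq
    obtain ⟨x, hx, rfl⟩ := hq
    exact (Metric.ediam_mono inter_subset_left).trans
      (le_iSup₂ (f := fun x _ => Metric.ediam (connectedComponentIn (N k) x)) x
        (iInter_subset N k hx))
  have hQs := isSplittingPartitionSeq_of_coe_eq hQ hcpt hnested hclosed hsplit
  exact hQs.nonempty_homeomorph_cantor
    ((hcpt 0).of_isClosed_subset (isClosed_iInter fun k => (hcpt k).isClosed) (iInter_subset N 0))
    hne (tendsto_of_tendsto_of_tendsto_of_le_of_le tendsto_const_nhds hdiam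
      (fun _ => zero_le) hmesh)

theorem homeomorphic_cantor_of_defining_sequence_general
    {X : Type*} [MetricSpace X] (M : ℕ → Set X)
    (hcpt : ∀ i, IsCompact (M i))
    (hnested : ∀ i, M (i + 1) ⊆ M i)
    -- each `M i` has finitely many components, each of which is closed
    (hfin : ∀ i, {S : Set X | ∃ x ∈ M i, S = connectedComponentIn (M i) x}.Finite)
    (hclosed : ∀ i, ∀ x ∈ M i, IsClosed (connectedComponentIn (M i) x))
    -- each component of `M i` contains at least two components of `M (i+2)`
    (hsplit : ∀ i, ∀ x ∈ M i, ∃ y ∈ M (i + 2) ∩ connectedComponentIn (M i) x,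
      ∃ z ∈ M (i + 2) ∩ connectedComponentIn (M i) x,
        connectedComponentIn (M (i + 2)) y ≠ connectedComponentIn (M (i + 2)) z)
    -- supremum of component diameters tends to 0
    (hdiam : Filter.Tendsto
      (fun i => ⨆ x ∈ M i, EMetric.diam (connectedComponentIn (M i) x))
      Filter.atTop (nhds 0))
    (C : Set X) (hC : C = ⋂ i, M i) (hCne : C.Nonempty) :
    Nonempty (C ≃ₜ (ℕ → Bool)) := by
  have hanti : Antitone M := antitone_nat_of_succ_le hnested
  have hC' : C = ⋂ k, M (2 * k) := hC.trans <| subset_antisymm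
    (subset_iInter fun k => iInter_subset M (2 * k))
    (subset_iInter fun i => (iInter_subset _ i).trans (hanti (by omega)))
  subst hC'
  exact nonempty_homeomorph_cantor_iInter (fun k => hcpt _) (fun k => hanti (by omega))
    (fun k => hfin _) (fun k => hclosed _) (fun k => hsplit _)
    (hdiam.comp (tendsto_atTop_mono (fun k => (by omega : k ≤ 2 * k)) tendsto_id)) hCne

/-- Brouwer-type criterion: the nested intersection of finite unions of compact
connected pieces, where every component splits within two stages and component
diameters tend to `0`, is homeomorphic to the Cantor set `ℕ → Bool`. -/
theorem homeomorphic_cantor_of_defining_sequence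
    {X : Type*} [MetricSpace X] (M : ℕ → Set X)
    (hne : ∀ i, (M i).Nonempty)
    (hcpt : ∀ i, IsCompact (M i))
    (hnested : ∀ i, M (i + 1) ⊆ M i)
    -- each `M i` has finitely many components, each of which is closed
    (hfin : ∀ i, {S : Set X | ∃ x ∈ M i, S = connectedComponentIn (M i) x}.Finite)
    (hclosed : ∀ i, ∀ x ∈ M i, IsClosed (connectedComponentIn (M i) x))
    -- each component of `M i` contains at least two components of `M (i+2)`
    (hsplit : ∀ i, ∀ x ∈ M i, ∃ y ∈ M (i + 2) ∩ connectedComponentIn (M i) x,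
      ∃ z ∈ M (i + 2) ∩ connectedComponentIn (M i) x,
        connectedComponentIn (M (i + 2)) y ≠ connectedComponentIn (M (i + 2)) z)
    -- supremum of component diameters tends to 0
    (hdiam : Filter.Tendsto
      (fun i => ⨆ x ∈ M i, EMetric.diam (connectedComponentIn (M i) x))
      Filter.atTop (nhds 0))
    (C : Set X) (hC : C = ⋂ i, M i) (hCne : C.Nonempty) :
    Nonempty (C ≃ₜ (ℕ → Bool)) :=
  homeomorphic_cantor_of_defining_sequence_general M hcpt hnested hfin hclosed hsplit hdiam C hC
    hCne
end
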